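/- Let m be an integer with m > 2. Then the dihedral rack D_{2m} is of type D. -/
import Mathlib


/-- A nonempty subset of `X` closed under the operation `op` (a subrack). -/
def IsSubrackOf {X : Type*} (op : X → X → X) (Y : Set X) : Prop :=
  Y.Nonempty ∧ ∀ a ∈ Y, ∀ b ∈ Y, op a b ∈ Y

/-- The rack with underlying set `C ⊆ X` and operation `op` is of type D:
there is a decomposable subrack `R ⊔ S` of `C` and `r ∈ R`, `s ∈ S` with
`r ▹ (s ▹ (r ▹ s)) ≠ s`. -/
def IsTypeDOn {X : Type*} (op : X → X → X) (C : Set X) : Prop :=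
  ∃ R S : Set X, R ⊆ C ∧ S ⊆ C ∧ IsSubrackOf op R ∧ IsSubrackOf op S ∧
    Disjoint R S ∧
    (∀ r ∈ R, ∀ s ∈ S, op r s ∈ S) ∧ (∀ s ∈ S, ∀ r ∈ R, op s r ∈ R) ∧
    ∃ r ∈ R, ∃ s ∈ S, op r (op s (op r s)) ≠ s

/-- The dihedral rack `D_{2m}`, i.e. `ℤ/2m` with `i ▹ j = 2i - j`, is of type D
whenever `m > 2`. -/
theorem dihedral_rack_D2m_isTypeD (m : ℕ) (hm : 2 < m) :
    IsTypeDOn (fun i j : ZMod (2 * m) => 2 * i - j) Set.univ := by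
  have hdvd : 2 ∣ 2 * m := dvd_mul_right 2 m
  set f := ZMod.castHom hdvd (ZMod 2) with hf
  have key : ∀ a b : ZMod (2 * m), f (2 * a - b) = f b := by
    intro a b
    have h2 : f 2 = 0 := by
      rw [show (2 : ZMod (2 * m)) = ((2 : ℕ) : ZMod (2 * m)) by norm_cast, map_natCast]
      decide
    rw [map_sub, map_mul, h2, zero_mul, zero_sub]
    exact CharTwo.neg_eq _
  refine ⟨{x | f x = 0}, {x | f x = 1}, Set.subset_univ _, Set.subset_univ _,
    ⟨⟨0, by simp⟩, fun a ha b hb => by simpa [key a b] using hb⟩,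
    ⟨⟨1, by simp⟩, fun a ha b hb => by simpa [key a b] using hb⟩,
    ?_, fun r hr s hs => by simpa [key r s] using hs,
    fun s hs r hr => by simpa [key s r] using hr,
    0, by simp, 1, by simp, ?_⟩
  · rw [Set.disjoint_left]
    intro x hx hx'
    simp only [Set.mem_setOf_eq] at hx hx'
    rw [hx] at hx'
    exact one_ne_zero hx'.symm
  · intro h
    have h4 : (4 : ZMod (2 * m)) = 0 := by linear_combination -h
    rw [show (4 : ZMod (2*m)) = ((4:ℕ) : ZMod (2*m)) by norm_cast] at h4
    rw [ZMod.natCast_eq_zero_iff] at h4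
    have := Nat.le_of_dvd (by norm_num) h4
    omega
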